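/- Expansion soundness for annotated variables: let Π φ be an S-form DQBF, x an existential variable, and τ a partial assignment to universal variables. Introduce a fresh existential variable x^τ with dependency set D_x \ dom(τ) and the constraint τ → (x^τ ↔ x). If Π φ is true, then the extended DQBF is true, witnessed by σ_{x^τ}(β) := σ_x(β combined with τ on dom(τ) ∩ D_x). -/
import Mathlib


inductive Fml where
  | tru | fls
  | var (v : ℕ)
  | neg (φ : Fml)
  | conj (φ ψ : Fml)
  | disj (φ ψ : Fml)

def Fml.eval (α : ℕ → Bool) : Fml → Bool
  | .tru => true
  | .fls => false
  | .var v => α v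
  | .neg φ => !(φ.eval α)
  | .conj φ ψ => φ.eval α && ψ.eval α
  | .disj φ ψ => φ.eval α || ψ.eval α

def Fml.vars : Fml → Finset ℕ
  | .tru => ∅
  | .fls => ∅
  | .var v => {v}
  | .neg φ => φ.vars
  | .conj φ ψ => φ.vars ∪ ψ.vars
  | .disj φ ψ => φ.vars ∪ ψ.vars

abbrev Lit := ℕ × Bool

/-- Total assignment induced by universal assignment `τ` and Skolem functions `σ`
for the existential variables `E`. -/
def totalAsgn (E : Finset ℕ) (σ : ℕ → (ℕ → Bool) → Bool) (τ : ℕ → Bool) : ℕ → Bool :=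
  fun w => if w ∈ E then σ w τ else τ w

def skolemDeps (E : Finset ℕ) (dep : ℕ → Finset ℕ) (σ : ℕ → (ℕ → Bool) → Bool) : Prop :=
  ∀ x ∈ E, ∀ τ τ' : ℕ → Bool, (∀ w ∈ dep x, τ w = τ' w) → σ x τ = σ x τ'

/-- Dependency set of a variable: declared set for existentials, itself for universals. -/
def depOf (E : Finset ℕ) (dep : ℕ → Finset ℕ) (y : ℕ) : Finset ℕ :=
  if y ∈ E then dep y else {y}

/-- A function only depends on the variables in `D`. -/
def depOnly (D : Finset ℕ) (f : (ℕ → Bool) → Bool) : Prop :=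
  ∀ τ τ' : ℕ → Bool, (∀ w ∈ D, τ w = τ' w) → f τ = f τ'


/-- The Skolem function of the annotated variable x^τ:
σ_{x^τ}(β) := σ_x(β combined with τ on dom(τ)). -/
def annotSigma (σ : ℕ → (ℕ → Bool) → Bool) (x : ℕ)
    (tdom : Finset ℕ) (tval : ℕ → Bool) : (ℕ → Bool) → Bool :=
  fun β => σ x (fun w => if w ∈ tdom then tval w else β w)

lemma Fml.eval_congr (φ : Fml) (α β : ℕ → Bool)
    (h : ∀ w ∈ φ.vars, α w = β w) : φ.eval α = φ.eval β := by
  induction φ with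
  | tru => rfl
  | fls => rfl
  | var v => exact h v (by simp [Fml.vars])
  | neg ψ ih => simp [Fml.eval, ih h]
  | conj ψ χ ih1 ih2 =>
      simp only [Fml.vars, Finset.mem_union] at h
      simp [Fml.eval, ih1 fun w hw => h w (Or.inl hw), ih2 fun w hw => h w (Or.inr hw)]
  | disj ψ χ ih1 ih2 =>
      simp only [Fml.vars, Finset.mem_union] at h
      simp [Fml.eval, ih1 fun w hw => h w (Or.inl hw), ih2 fun w hw => h w (Or.inr hw)]

/-- Expansion soundness for annotated variables: if Π φ is a true S-form DQBF,
x an existential variable, and τ a partial universal assignment, then adding a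
fresh existential x^τ (here v) with dependency set D_x \ dom(τ) together with
the constraint τ → (v ↔ x) yields a true DQBF, witnessed by `annotSigma`. -/
theorem annotated_expansion_sound
    (E : Finset ℕ) (dep : ℕ → Finset ℕ) (φ : Fml)
    (σ : ℕ → (ℕ → Bool) → Bool)
    (hσ : skolemDeps E dep σ)
    (hsat : ∀ γ : ℕ → Bool, φ.eval (totalAsgn E σ γ) = true)
    (x : ℕ) (hx : x ∈ E)
    (tdom : Finset ℕ) (tval : ℕ → Bool) (htU : ∀ u ∈ tdom, u ∉ E)
    (v : ℕ) (hvE : v ∉ E) (hvφ : v ∉ φ.vars) (hvx : v ≠ x) (hvt : v ∉ tdom) :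
    skolemDeps (insert v E) (Function.update dep v (dep x \ tdom))
      (Function.update σ v (annotSigma σ x tdom tval)) ∧
    ∀ γ : ℕ → Bool,
      φ.eval (totalAsgn (insert v E)
        (Function.update σ v (annotSigma σ x tdom tval)) γ) = true ∧
      ((∀ u ∈ tdom, γ u = tval u) →
        totalAsgn (insert v E) (Function.update σ v (annotSigma σ x tdom tval)) γ v =
        totalAsgn (insert v E) (Function.update σ v (annotSigma σ x tdom tval)) γ x) := by
  set σ' := Function.update σ v (annotSigma σ x tdom tval) with hσ'
  have hσ'v : σ' v = annotSigma σ x tdom tval := Function.update_self _ _ _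
  have hσ'ne : ∀ y, y ≠ v → σ' y = σ y := fun y hy => Function.update_of_ne hy _ _
  refine ⟨?_, ?_⟩
  · intro y hy τ τ' hagree
    rcases Finset.mem_insert.mp hy with rfl | hyE
    · rw [hσ'v]
      simp only [Function.update_self] at hagree
      unfold annotSigma
      apply hσ x hx
      intro w hw
      by_cases hwt : w ∈ tdom
      · simp [hwt]
      · simp only [if_neg hwt]
        exact hagree w (Finset.mem_sdiff.mpr ⟨hw, hwt⟩)
    · have hyne : y ≠ v := fun h => hvE (h ▸ hyE)
      rw [hσ'ne y hyne]
      simp only [Function.update_of_ne hyne] at hagree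
      exact hσ y hyE τ τ' hagree
  · intro γ
    constructor
    · have key : ∀ w ∈ φ.vars, totalAsgn (insert v E) σ' γ w = totalAsgn E σ γ w := by
        intro w hw
        have hwv : w ≠ v := fun h => hvφ (h ▸ hw)
        unfold totalAsgn
        by_cases hwE : w ∈ E
        · simp [hwE, hσ'ne w hwv, Finset.mem_insert_of_mem hwE]
        · have : w ∉ insert v E := by
            simp [Finset.mem_insert, hwv, hwE]
          simp [hwE, this]
      rw [Fml.eval_congr φ _ _ key]
      exact hsat γ
    · intro hτ
      have hvmem : v ∈ insert v E := Finset.mem_insert_self _ _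
      have hxmem : x ∈ insert v E := Finset.mem_insert_of_mem hx
      unfold totalAsgn
      rw [if_pos hvmem, if_pos hxmem, hσ'v, hσ'ne x (fun h => hvx h.symm)]
      unfold annotSigma
      apply hσ x hx
      intro w _
      by_cases hwt : w ∈ tdom
      · simp [hwt, (hτ w hwt).symm]
      · simp [hwt]
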